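/- Ordering of mutual information measures: I_s(Ũ;Ṽ) ≤ I(U;V) ≤ H(V) − H_s(Ṽ|U) ≤ I^s(Ũ;Ṽ), where I_s(Ũ;Ṽ) = H_s(Ũ)+H_s(Ṽ)−H(U,V) and I^s(Ũ;Ṽ) = H(U)+H(V)−H_s(Ũ,Ṽ). -/

import Mathlib

open Finset

/-- Probability of the block of index `i` under the partition induced by `blk`. -/
noncomputable def blockProb {U B : Type*} [Fintype U] [DecidableEq B]
    (p : U → ℝ) (blk : U → B) (i : B) : ℝ :=
  ∑ u : U, if blk u = i then p u else 0

/-- Semantic entropy: entropy of the block probabilities. -/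
noncomputable def semEntropy {U B : Type*} [Fintype U] [Fintype B] [DecidableEq B]
    (p : U → ℝ) (blk : U → B) : ℝ :=
  -∑ i : B, blockProb p blk i * Real.logb 2 (blockProb p blk i)

/-- Shannon entropy of a pmf on a finite alphabet (base 2). -/
noncomputable def shannonEntropy {U : Type*} [Fintype U] (p : U → ℝ) : ℝ :=
  -∑ u : U, p u * Real.logb 2 (p u)

/-- Semantic conditional entropy `H_s(Ṽ|U)` for the joint pmf `p` on `U × V`. -/
noncomputable def condSemEntropy {U V J : Type*} [Fintype U] [Fintype V] [Fintype J]
    [DecidableEq J] (p : U × V → ℝ) (blkV : V → J) : ℝ :=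
  -∑ u : U, ∑ j : J,
    (∑ v : V, if blkV v = j then p (u, v) else 0) *
      Real.logb 2 ((∑ v : V, if blkV v = j then p (u, v) else 0) / (∑ v : V, p (u, v)))

/-! Coarse-graining a distribution along a map can only lower its entropy, since each atom is
bounded by the block containing it. With the chain rule `H(q) = H(q_U) + H(q | U)` for joint
distributions on `U × K`, the semantic conditional entropy `H_s(Ṽ|U)` becomes `H(U,Ṽ) - H(U)`,
where `(U,Ṽ)` is the coarse-graining of `(U,V)` along `blkV` in the second coordinate. All three
inequalities then compare entropies of successive coarse-grainings:
`(U,V) → (U,Ṽ) → (Ũ,Ṽ)` and `U → Ũ`, `V → Ṽ`. -/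

lemma mul_logb_div_of_le {a b : ℝ} (ha : 0 ≤ a) (hab : a ≤ b) :
    a * Real.logb 2 (a / b) = a * Real.logb 2 a - a * Real.logb 2 b := by
  rcases ha.eq_or_lt with rfl | ha
  · simp
  · rw [Real.logb_div ha.ne' (ha.trans_le hab).ne', mul_sub]

lemma mul_logb_le_mul_logb {a c : ℝ} (ha : 0 ≤ a) (hac : a ≤ c) :
    a * Real.logb 2 a ≤ a * Real.logb 2 c := by
  rcases ha.eq_or_lt with rfl | ha
  · simp
  · exact mul_le_mul_of_nonneg_left (Real.logb_le_logb_of_le (by norm_num) ha hac) ha.le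

section BlockProb

variable {U B C : Type*} [Fintype U] [DecidableEq B]

lemma sum_blockProb_mul [Fintype B] (p : U → ℝ) (blk : U → B) (f : B → ℝ) :
    ∑ i, blockProb p blk i * f i = ∑ u, p u * f (blk u) := by
  simp_rw [blockProb, sum_mul, ite_mul, zero_mul]
  rw [sum_comm]
  simp

lemma le_blockProb {p : U → ℝ} (hp : ∀ u, 0 ≤ p u) (blk : U → B) (u : U) :
    p u ≤ blockProb p blk (blk u) :=
  single_le_sum (f := fun u' => if blk u' = blk u then p u' else 0)
    (fun u' _ => by split_ifs <;> simp [hp u']) (mem_univ u) |>.trans_eq' (by simp)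

lemma blockProb_nonneg {p : U → ℝ} (hp : ∀ u, 0 ≤ p u) (blk : U → B) (i : B) :
    0 ≤ blockProb p blk i :=
  sum_nonneg fun u _ => by split_ifs <;> simp [hp u]

lemma blockProb_blockProb [Fintype B] [DecidableEq C] (p : U → ℝ) (f : U → B) (g : B → C) :
    blockProb (blockProb p f) g = blockProb p (g ∘ f) := by
  funext k
  have h := sum_blockProb_mul p f (fun b => if g b = k then (1 : ℝ) else 0)
  simp only [mul_ite, mul_one, mul_zero] at h
  exact h

lemma semEntropy_blockProb [Fintype B] [Fintype C] [DecidableEq C]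
    (p : U → ℝ) (f : U → B) (g : B → C) :
    semEntropy (blockProb p f) g = semEntropy p (g ∘ f) := by
  simp only [semEntropy, blockProb_blockProb]

theorem semEntropy_le_shannonEntropy [Fintype B] {p : U → ℝ} (hp : ∀ u, 0 ≤ p u)
    (blk : U → B) : semEntropy p blk ≤ shannonEntropy p := by
  rw [semEntropy, shannonEntropy,
    sum_blockProb_mul p blk (fun i => Real.logb 2 (blockProb p blk i)), neg_le_neg_iff]
  exact sum_le_sum fun u _ => mul_logb_le_mul_logb (hp u) (le_blockProb hp blk u)

end BlockProb

section Joint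

variable {U K V J : Type*} [Fintype U] [Fintype K]

lemma blockProb_snd_apply [DecidableEq K] (q : U × K → ℝ) (k : K) :
    blockProb q Prod.snd k = ∑ u, q (u, k) := by
  simp [blockProb, Fintype.sum_prod_type]

variable [DecidableEq U]

lemma blockProb_fst_apply (q : U × K → ℝ) (u : U) :
    blockProb q Prod.fst u = ∑ k, q (u, k) := by
  simp only [blockProb, Fintype.sum_prod_type]
  rw [sum_comm]
  simp

lemma blockProb_map_snd_apply [Fintype V] [DecidableEq J] (p : U × V → ℝ) (g : V → J)
    (u : U) (j : J) :
    blockProb p (Prod.map id g) (u, j) = ∑ v, if g v = j then p (u, v) else 0 := by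
  simp [blockProb, Fintype.sum_prod_type, Prod.ext_iff, ite_and]

lemma blockProb_map_snd_fst [Fintype V] [Fintype J] [DecidableEq J] (p : U × V → ℝ)
    (g : V → J) : blockProb (blockProb p (Prod.map id g)) Prod.fst = blockProb p Prod.fst :=
  blockProb_blockProb p _ _

noncomputable def condEntropy (q : U × K → ℝ) : ℝ :=
  -∑ u, ∑ k, q (u, k) * Real.logb 2 (q (u, k) / blockProb q Prod.fst u)

theorem shannonEntropy_eq_add_condEntropy {q : U × K → ℝ} (hq : ∀ x, 0 ≤ q x) :
    shannonEntropy q = shannonEntropy (blockProb q Prod.fst) + condEntropy q := by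
  have hfiber : ∀ u, ∑ k, q (u, k) * Real.logb 2 (q (u, k) / blockProb q Prod.fst u) =
      ∑ k, q (u, k) * Real.logb 2 (q (u, k)) -
        blockProb q Prod.fst u * Real.logb 2 (blockProb q Prod.fst u) := by
    intro u
    rw [sum_congr rfl fun k _ =>
      mul_logb_div_of_le (b := blockProb q Prod.fst u) (hq _) (le_blockProb hq Prod.fst (u, k)),
      sum_sub_distrib, ← sum_mul, ← blockProb_fst_apply]
  simp only [shannonEntropy, condEntropy, hfiber, sum_sub_distrib, Fintype.sum_prod_type]
  ring

lemma condSemEntropy_eq_condEntropy [Fintype V] [Fintype J] [DecidableEq J]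
    (p : U × V → ℝ) (blkV : V → J) :
    condSemEntropy p blkV = condEntropy (blockProb p (Prod.map id blkV)) := by
  rw [condEntropy, blockProb_map_snd_fst]
  simp only [condSemEntropy, blockProb_map_snd_apply, blockProb_fst_apply]

end Joint

theorem mutualInfo_ordering_general
    {U V I J : Type*} [Fintype U] [Fintype V] [Fintype I] [Fintype J]
    [DecidableEq I] [DecidableEq J]
    (p : U × V → ℝ) (blkU : U → I) (blkV : V → J)
    (hp : ∀ x, 0 ≤ p x) :
    semEntropy (fun u => ∑ v : V, p (u, v)) blkU +
        semEntropy (fun v => ∑ u : U, p (u, v)) blkV - shannonEntropy p ≤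
      shannonEntropy (fun u => ∑ v : V, p (u, v)) +
        shannonEntropy (fun v => ∑ u : U, p (u, v)) - shannonEntropy p ∧
    shannonEntropy (fun u => ∑ v : V, p (u, v)) +
        shannonEntropy (fun v => ∑ u : U, p (u, v)) - shannonEntropy p ≤
      shannonEntropy (fun v => ∑ u : U, p (u, v)) - condSemEntropy p blkV ∧
    shannonEntropy (fun v => ∑ u : U, p (u, v)) - condSemEntropy p blkV ≤
      shannonEntropy (fun u => ∑ v : V, p (u, v)) +
        shannonEntropy (fun v => ∑ u : U, p (u, v)) -
        semEntropy p (fun x => (blkU x.1, blkV x.2)) := by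
  classical
  set pU : U → ℝ := blockProb p Prod.fst
  set Q : U × J → ℝ := blockProb p (Prod.map id blkV)
  have hpU : (fun u => ∑ v, p (u, v)) = pU := funext fun u => (blockProb_fst_apply p u).symm
  have hpV : (fun v => ∑ u, p (u, v)) = blockProb p Prod.snd :=
    funext fun v => (blockProb_snd_apply p v).symm
  have hQ_fst : blockProb Q Prod.fst = pU := blockProb_map_snd_fst p blkV
  have hcond : condSemEntropy p blkV = shannonEntropy Q - shannonEntropy pU := by
    rw [condSemEntropy_eq_condEntropy,
      shannonEntropy_eq_add_condEntropy (blockProb_nonneg hp _), hQ_fst]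
    ring
  have hQ_le : shannonEntropy Q ≤ shannonEntropy p := semEntropy_le_shannonEntropy hp _
  have hprod : semEntropy p (fun x => (blkU x.1, blkV x.2)) ≤ shannonEntropy Q :=
    (semEntropy_blockProb p (Prod.map id blkV) (Prod.map blkU id)).symm.trans_le
      (semEntropy_le_shannonEntropy (blockProb_nonneg hp _) _)
  have hsemU := semEntropy_le_shannonEntropy (blockProb_nonneg hp Prod.fst) blkU
  have hsemV := semEntropy_le_shannonEntropy (blockProb_nonneg hp Prod.snd) blkV
  rw [hpU, hpV, hcond]
  exact ⟨by linarith, by linarith, by linarith⟩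

/-- Ordering of mutual information measures:
`I_s(Ũ;Ṽ) ≤ I(U;V) ≤ H(V) − H_s(Ṽ|U) ≤ I^s(Ũ;Ṽ)`, where
`I_s(Ũ;Ṽ) = H_s(Ũ) + H_s(Ṽ) − H(U,V)` and `I^s(Ũ;Ṽ) = H(U) + H(V) − H_s(Ũ,Ṽ)`. -/
theorem mutualInfo_ordering
    {U V I J : Type*} [Fintype U] [Fintype V] [Fintype I] [Fintype J]
    [DecidableEq I] [DecidableEq J]
    (p : U × V → ℝ) (blkU : U → I) (blkV : V → J)
    (hp : ∀ x, 0 ≤ p x) (hsum : ∑ x, p x = 1) :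
    semEntropy (fun u => ∑ v : V, p (u, v)) blkU +
        semEntropy (fun v => ∑ u : U, p (u, v)) blkV - shannonEntropy p ≤
      shannonEntropy (fun u => ∑ v : V, p (u, v)) +
        shannonEntropy (fun v => ∑ u : U, p (u, v)) - shannonEntropy p ∧
    shannonEntropy (fun u => ∑ v : V, p (u, v)) +
        shannonEntropy (fun v => ∑ u : U, p (u, v)) - shannonEntropy p ≤
      shannonEntropy (fun v => ∑ u : U, p (u, v)) - condSemEntropy p blkV ∧
    shannonEntropy (fun v => ∑ u : U, p (u, v)) - condSemEntropy p blkV ≤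
      shannonEntropy (fun u => ∑ v : V, p (u, v)) +
        shannonEntropy (fun v => ∑ u : U, p (u, v)) -
        semEntropy p (fun x => (blkU x.1, blkV x.2)) :=
  mutualInfo_ordering_general p blkU blkV hp
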